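/- arXiv:2102.03335 — 6 statements merged into one kernel-verified Lean document; each statement's English description precedes it below -/
import Mathlib

section
/- Let M solve the Dyson equation -M⁻¹ = [[iη, ζ], [conj(ζ), iη]] + S[M] with positive definite imaginary part, for η > 0 and ζ ∈ ℂ. Then the operator norm of M satisfies ‖M‖ ≤ min(1, 1/η), and in particular ‖M‖ ≤ 2/(1+η). -/
open Matrix
open scoped Matrix.Norms.L2Operator ComplexOrder

/-- The self-energy operator of the elliptic ensemble. -/
noncomputable def selfEnergy (ρ : ℝ) (A : Matrix (Fin 2) (Fin 2) ℂ) : Matrix (Fin 2) (Fin 2) ℂ :=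
  !![A 1 1, (ρ : ℂ) * A 1 0; (ρ : ℂ) * A 0 1, A 0 0]

/-!
Put `s = v ^ 2 + |b| ^ 2`. The ansatz `M = [[i v, conj b], [b, i v]]` satisfies `Mᴴ M = s • 1`,
so `‖M‖ ^ 2 = s ≥ v ^ 2`. Its determinant is `-s`, so `(M⁻¹)₀₀ = -i v / s`, and the `(0, 0)`
entry of the Dyson equation reads `v / s = η + v`. Hence `‖M‖ ^ 2 (η + v) = v ≤ ‖M‖`, which
gives both `‖M‖ < 1` and `‖M‖ η ≤ 1`.
-/

theorem Matrix.l2_opNorm_mul_self_eq_of_conjTranspose_mul_self_eq_smul_one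
    {𝕜 n : Type*} [RCLike 𝕜] [Fintype n] [DecidableEq n] [Nonempty n]
    {A : Matrix n n 𝕜} {r : ℝ} (hr : 0 ≤ r) (hA : Aᴴ * A = (r : 𝕜) • 1) :
    ‖A‖ * ‖A‖ = r := by
  rw [← l2_opNorm_conjTranspose_mul_self, hA, norm_smul, norm_one, mul_one, RCLike.norm_ofReal,
    abs_of_nonneg hr]

def dysonAnsatz (v : ℝ) (b : ℂ) : Matrix (Fin 2) (Fin 2) ℂ :=
  !![Complex.I * v, (starRingEnd ℂ) b; b, Complex.I * v]

section DysonAnsatz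

variable (v : ℝ) (b : ℂ)

theorem conjTranspose_mul_self_dysonAnsatz :
    (dysonAnsatz v b)ᴴ * dysonAnsatz v b = ((v ^ 2 + Complex.normSq b : ℝ) : ℂ) • 1 := by
  ext i j
  fin_cases i <;> fin_cases j <;>
    simp [dysonAnsatz, mul_apply, Fin.sum_univ_two, Complex.normSq_eq_conj_mul_self] <;>
    ring_nf <;> simp [Complex.I_sq]

theorem det_dysonAnsatz : det (dysonAnsatz v b) = -((v ^ 2 + Complex.normSq b : ℝ) : ℂ) := by
  rw [dysonAnsatz, det_fin_two_of]
  push_cast [Complex.normSq_eq_conj_mul_self]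
  linear_combination (v : ℂ) ^ 2 * Complex.I_sq

theorem inv_dysonAnsatz_zero_zero :
    (dysonAnsatz v b)⁻¹ 0 0 = -(Complex.I * v) / ((v ^ 2 + Complex.normSq b : ℝ) : ℂ) := by
  rw [inv_def, Ring.inverse_eq_inv', det_dysonAnsatz, dysonAnsatz, adjugate_fin_two_of, inv_neg,
    neg_div, div_eq_inv_mul]
  simp

end DysonAnsatz

theorem eq_mul_of_dyson_dysonAnsatz {ρ η v : ℝ} {ζ b : ℂ}
    (hdyson : -(dysonAnsatz v b)⁻¹ =
      !![Complex.I * η, ζ; (starRingEnd ℂ) ζ, Complex.I * η] + selfEnergy ρ (dysonAnsatz v b)) :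
    v = (η + v) * (v ^ 2 + Complex.normSq b) := by
  have h : v / (v ^ 2 + Complex.normSq b) = η + v := by
    have h₀₀ := congrArg Complex.im (congrFun (congrFun hdyson 0) 0)
    rw [Matrix.neg_apply, inv_dysonAnsatz_zero_zero, neg_div, neg_neg, Complex.div_ofReal_im] at h₀₀
    simpa [selfEnergy, dysonAnsatz] using h₀₀
  rcases eq_or_ne (v ^ 2 + Complex.normSq b) 0 with hs | hs
  · rw [hs, mul_zero]
    nlinarith [Complex.normSq_nonneg b]
  · rw [div_eq_iff hs] at h
    linarith

theorem le_min_one_one_div_of_eq_mul_mul_self {η v m : ℝ} (hη : 0 < η) (hv : 0 < v)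
    (hvm : v ≤ m) (hm : v = (η + v) * (m * m)) : m ≤ min 1 (1 / η) := by
  have hm₀ : 0 < m := hv.trans_le hvm
  have hm_mul : m * (η + v) ≤ 1 := by nlinarith
  have hm_sq : m * m < 1 := by nlinarith
  refine le_min ?_ ?_
  · nlinarith
  · rw [le_div_iff₀ hη]
    nlinarith

theorem min_one_one_div_le_two_div_one_add {η : ℝ} (hη : 0 < η) :
    min 1 (1 / η) ≤ 2 / (1 + η) := by
  rcases le_total η 1 with h | h
  · exact (min_le_left _ _).trans (by rw [le_div_iff₀ (by linarith)]; linarith)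
  · exact (min_le_right _ _).trans (by rw [div_le_div_iff₀ hη (by linarith)]; linarith)

theorem stmt1_general (ρ η : ℝ) (hη : 0 < η) (ζ : ℂ)
    (M : Matrix (Fin 2) (Fin 2) ℂ) (v : ℝ) (b : ℂ) (hv : 0 < v)
    (hform : M = !![Complex.I * v, (starRingEnd ℂ) b; b, Complex.I * v])
    (hdyson : -M⁻¹ = !![Complex.I * η, ζ; (starRingEnd ℂ) ζ, Complex.I * η] + selfEnergy ρ M) :
    ‖M‖ ≤ min 1 (1 / η) ∧ ‖M‖ ≤ 2 / (1 + η) := by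
  obtain rfl : M = dysonAnsatz v b := hform
  have hnorm : ‖dysonAnsatz v b‖ * ‖dysonAnsatz v b‖ = v ^ 2 + Complex.normSq b :=
    l2_opNorm_mul_self_eq_of_conjTranspose_mul_self_eq_smul_one
      (add_nonneg (sq_nonneg v) (Complex.normSq_nonneg b)) (conjTranspose_mul_self_dysonAnsatz v b)
  have hv_le : v ≤ ‖dysonAnsatz v b‖ :=
    (mul_self_le_mul_self_iff hv.le (norm_nonneg _)).2 (by nlinarith [Complex.normSq_nonneg b])
  have hM := le_min_one_one_div_of_eq_mul_mul_self hη hv hv_le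
    (hnorm ▸ eq_mul_of_dyson_dysonAnsatz hdyson)
  exact ⟨hM, hM.trans (min_one_one_div_le_two_div_one_add hη)⟩

theorem stmt1 (ρ η : ℝ) (hρ₁ : -1 < ρ) (hρ₂ : ρ < 1) (hη : 0 < η) (ζ : ℂ)
    (M : Matrix (Fin 2) (Fin 2) ℂ) (v : ℝ) (b : ℂ) (hv : 0 < v)
    (hform : M = !![Complex.I * v, (starRingEnd ℂ) b; b, Complex.I * v])
    (hunit : IsUnit M.det)
    (hIm : ((2 * Complex.I)⁻¹ • (M - Mᴴ)).PosDef)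
    (hdyson : -M⁻¹ = !![Complex.I * η, ζ; (starRingEnd ℂ) ζ, Complex.I * η] + selfEnergy ρ M) :
    ‖M‖ ≤ min 1 (1 / η) ∧ ‖M‖ ≤ 2 / (1 + η) :=
  stmt1_general ρ η hη ζ M v b hv hform hdyson
end

section
/- Let M = [[iv, conj(b)],[b, iv]] with v > 0 solve the Dyson equation for η > 0, ζ ∈ ℂ and ρ ∈ (-1,1). Then b = -Re(ζ)/(1 + ρ + η/v) + i·Im(ζ)/(1 - ρ + η/v). -/
open Matrix

theorem stmt3 (ρ η v : ℝ) (hρ₁ : -1 < ρ) (hρ₂ : ρ < 1) (hη : 0 < η) (hv : 0 < v)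
    (ζ b : ℂ) (M : Matrix (Fin 2) (Fin 2) ℂ)
    (hform : M = !![Complex.I * v, (starRingEnd ℂ) b; b, Complex.I * v])
    (hunit : IsUnit M.det)
    (hdyson : -M⁻¹ = !![Complex.I * η, ζ; (starRingEnd ℂ) ζ, Complex.I * η] + selfEnergy ρ M) :
    b = -((ζ.re / (1 + ρ + η / v) : ℝ) : ℂ)
        + Complex.I * ((ζ.im / (1 - ρ + η / v) : ℝ) : ℂ) := by
  have h1 : M * (-M⁻¹) = -1 := by
    rw [Matrix.mul_neg, Matrix.mul_nonsing_inv M hunit]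
  rw [hdyson, hform] at h1
  have h := congrArg (fun A => A 0 1) h1
  simp [selfEnergy, Matrix.mul_apply, Fin.sum_univ_two] at h
  rw [Complex.ext_iff] at h
  simp at h
  obtain ⟨hre, him⟩ := h
  have hv' : v ≠ 0 := ne_of_gt hv
  have hd1 : (0:ℝ) < 1 + ρ + η / v := by
    have := div_pos hη hv; linarith
  have hd2 : (0:ℝ) < 1 - ρ + η / v := by
    have := div_pos hη hv; linarith
  refine Complex.ext ?_ ?_
  · simp only [Complex.add_re, Complex.neg_re, Complex.ofReal_re, Complex.mul_re,
      Complex.I_re, Complex.I_im, Complex.ofReal_im]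
    have hden1 : (1+ρ)*v + η ≠ 0 := by nlinarith
    field_simp
    linear_combination him
  · simp only [Complex.add_im, Complex.neg_im, Complex.ofReal_im, Complex.mul_im,
      Complex.I_re, Complex.I_im, Complex.ofReal_re]
    have hden2 : (1-ρ)*v + η ≠ 0 := by nlinarith
    field_simp
    linear_combination hre
end

section
/- The restriction of the self-energy operator S to the orthogonal complement of E₋ = diag(1,-1) in ℂ^{2×2} (with respect to the Hilbert–Schmidt inner product) is self-adjoint with spectrum {1, ρ, -ρ}, with eigenvectors the identity matrix, the first Pauli matrix [[0,1],[1,0]], and the second Pauli matrix [[0,-i],[i,0]], respectively. -/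
open Matrix

/-- The Hilbert–Schmidt inner product on `2 × 2` matrices. -/
noncomputable def hsInner (A B : Matrix (Fin 2) (Fin 2) ℂ) : ℂ := (Aᴴ * B).trace

theorem stmt10 (ρ : ℝ) (hρ₁ : -1 < ρ) (hρ₂ : ρ < 1) :
    (∀ A : Matrix (Fin 2) (Fin 2) ℂ, A 0 0 = A 1 1 →
      selfEnergy ρ A 0 0 = selfEnergy ρ A 1 1) ∧
    (∀ A B : Matrix (Fin 2) (Fin 2) ℂ, A 0 0 = A 1 1 → B 0 0 = B 1 1 →
      hsInner (selfEnergy ρ A) B = hsInner A (selfEnergy ρ B)) ∧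
    selfEnergy ρ 1 = 1 ∧
    selfEnergy ρ !![0, 1; 1, 0] = (ρ : ℂ) • !![0, 1; 1, 0] ∧
    selfEnergy ρ !![0, -Complex.I; Complex.I, 0]
      = (-(ρ : ℂ)) • !![0, -Complex.I; Complex.I, 0] ∧
    (∀ (c : ℂ) (A : Matrix (Fin 2) (Fin 2) ℂ), A 0 0 = A 1 1 → A ≠ 0 →
      selfEnergy ρ A = c • A → c = 1 ∨ c = (ρ : ℂ) ∨ c = -(ρ : ℂ)) := by
  refine ⟨?_, ?_, ?_, ?_, ?_, ?_⟩
  · intro A h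
    simp [selfEnergy, h]
  · intro A B hA hB
    simp only [hsInner, selfEnergy, trace_fin_two, mul_apply, Fin.sum_univ_two,
      conjTranspose_apply, of_apply, cons_val', cons_val_zero, cons_val_one, head_cons,
      head_fin_const, _root_.map_mul, Complex.star_def, Complex.conj_ofReal]
    rw [hA, hB]
    ring
  · ext i j
    fin_cases i <;> fin_cases j <;> simp [selfEnergy, Matrix.one_apply]
  · ext i j
    fin_cases i <;> fin_cases j <;> simp [selfEnergy]
  · ext i j
    fin_cases i <;> fin_cases j <;> simp [selfEnergy]
  · intro c A hA hA0 hE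
    have h00 : A 1 1 = c * A 0 0 := by
      have := congrFun (congrFun hE 0) 0
      simpa [selfEnergy] using this
    have h01 : (ρ : ℂ) * A 1 0 = c * A 0 1 := by
      have := congrFun (congrFun hE 0) 1
      simpa [selfEnergy] using this
    have h10 : (ρ : ℂ) * A 0 1 = c * A 1 0 := by
      have := congrFun (congrFun hE 1) 0
      simpa [selfEnergy] using this
    by_cases hd : A 0 0 = 0
    · have h1 : A 1 1 = 0 := hA ▸ hd
      have hne : A 0 1 ≠ 0 ∨ A 1 0 ≠ 0 := by
        by_contra h
        push_neg at h
        apply hA0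
        ext i j
        fin_cases i <;> fin_cases j <;> simp_all
      have e01 : (c ^ 2 - (ρ : ℂ) ^ 2) * A 0 1 = 0 := by
        linear_combination -c * h01 - (ρ : ℂ) * h10
      have e10 : (c ^ 2 - (ρ : ℂ) ^ 2) * A 1 0 = 0 := by
        linear_combination -c * h10 - (ρ : ℂ) * h01
      have hsq : c ^ 2 - (ρ : ℂ) ^ 2 = 0 := by
        rcases hne with h | h
        · exact (mul_eq_zero.1 e01).resolve_right h
        · exact (mul_eq_zero.1 e10).resolve_right h
      have : (c - (ρ : ℂ)) * (c + (ρ : ℂ)) = 0 := by linear_combination hsq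
      rcases mul_eq_zero.1 this with h | h
      · exact Or.inr (Or.inl (by linear_combination h))
      · exact Or.inr (Or.inr (by linear_combination h))
    · left
      have h : (c - 1) * A 0 0 = 0 := by
        rw [← hA] at h00
        linear_combination -h00
      rcases mul_eq_zero.1 h with h | h
      · linear_combination h
      · exact absurd h hd
end

section
/- The self-energy operator S : ℂ^{2×2} → ℂ^{2×2}, S[[a₁₁,a₁₂],[a₂₁,a₂₂]] = [[a₂₂, ρ a₂₁],[ρ a₁₂, a₁₁]] with ρ ∈ (-1,1), leaves the subspace E₋^⊥ = {A ∈ ℂ^{2×2} : a₁₁ = a₂₂} invariant, and its operator norm on E₋^⊥ with respect to the Hilbert–Schmidt norm equals 1. -/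
open Matrix

/-- The Hilbert–Schmidt norm on `2 × 2` matrices. -/
noncomputable def hsNorm (A : Matrix (Fin 2) (Fin 2) ℂ) : ℝ := Real.sqrt ((Aᴴ * A).trace.re)

lemma hsNorm_eq (A : Matrix (Fin 2) (Fin 2) ℂ) :
    hsNorm A = Real.sqrt (Complex.normSq (A 0 0) + Complex.normSq (A 0 1) +
      Complex.normSq (A 1 0) + Complex.normSq (A 1 1)) := by
  simp [hsNorm, Matrix.trace, Matrix.mul_apply, Fin.sum_univ_two, conjTranspose_apply,
    Complex.normSq_apply, Complex.mul_re]
  ring_nf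

theorem stmt11 (ρ : ℝ) (hρ₁ : -1 < ρ) (hρ₂ : ρ < 1) :
    (∀ A : Matrix (Fin 2) (Fin 2) ℂ, A 0 0 = A 1 1 →
      selfEnergy ρ A 0 0 = selfEnergy ρ A 1 1) ∧
    (∀ A : Matrix (Fin 2) (Fin 2) ℂ, A 0 0 = A 1 1 →
      hsNorm (selfEnergy ρ A) ≤ hsNorm A) ∧
    (∃ A : Matrix (Fin 2) (Fin 2) ℂ, A 0 0 = A 1 1 ∧ A ≠ 0 ∧
      hsNorm (selfEnergy ρ A) = hsNorm A) := by
  have hρ2 : ρ ^ 2 ≤ 1 := by nlinarith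
  refine ⟨fun A h => by simp [selfEnergy, h], fun A h => ?_, ?_⟩
  · rw [hsNorm_eq, hsNorm_eq]
    apply Real.sqrt_le_sqrt
    simp only [selfEnergy, Matrix.of_apply, Matrix.cons_val', Matrix.cons_val_zero,
      Matrix.cons_val_one, Matrix.head_cons, Matrix.empty_val', Matrix.cons_val_fin_one,
      Matrix.head_fin_const]
    have h01 : Complex.normSq ((ρ : ℂ) * A 0 1) ≤ Complex.normSq (A 0 1) := by
      rw [Complex.normSq_mul]
      have : Complex.normSq (ρ : ℂ) = ρ ^ 2 := by
        simp [Complex.normSq_apply]; ring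
      nlinarith [Complex.normSq_nonneg (A 0 1)]
    have h10 : Complex.normSq ((ρ : ℂ) * A 1 0) ≤ Complex.normSq (A 1 0) := by
      rw [Complex.normSq_mul]
      have : Complex.normSq (ρ : ℂ) = ρ ^ 2 := by
        simp [Complex.normSq_apply]; ring
      nlinarith [Complex.normSq_nonneg (A 1 0)]
    linarith
  · refine ⟨1, by simp, by simp, ?_⟩
    rw [hsNorm_eq, hsNorm_eq]
    simp [selfEnergy, Matrix.one_apply]
end

section
/- Rotation-inversion consequence for the elliptic stability operator (explicit bound): Let ρ ∈ (-1,1), η ∈ (0,1], and let M = [[iv, conj(b)],[b, iv]] with v > 0 satisfy v² + |b|² = v/(η+v). Write M = |M|U with unitary U = M/√(v²+|b|²). Define on E₋^⊥ the operators T(R) = (v²+|b|²)·S(R) and 𝒰(R) = U* R U*. Then T is self-adjoint on E₋^⊥ with ‖T‖ = v²+|b|² ≤ 1, its top eigenvalue is nondegenerate with normalized eigenvector h = I/√2, with Gap(T) = (v²+|b|²)(1-|ρ|), and 1 - ‖T‖·⟨h, 𝒰 h⟩_{HS} = 2v² + η/(η+v). -/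
open Matrix

/-!
On `E₋^⊥` the map `S` fixes the identity and acts on the off-diagonal entries as `ρ` times the
swap, so its eigenvalues there are `1` (with eigenvector `I` only, as `ρ² ≠ 1`) and `±ρ`, and
`‖S R‖_HS ≤ ‖R‖_HS` because `|ρ| ≤ 1`. Since `h` is a multiple of `I`, the scalar
`k ⟨h, U* h U*⟩` is `tr((M*)²) / 2 = |b|² - v²`, and the relation `k = v / (η + v)` turns
`1 - (|b|² - v²) = 1 - k + 2v²` into `2v² + η / (η + v)`.
-/

section HilbertSchmidt

lemma hsNorm_eq_sqrt_sum_norm_sq (A : Matrix (Fin 2) (Fin 2) ℂ) :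
    hsNorm A = Real.sqrt (∑ i, ∑ j, ‖A i j‖ ^ 2) := by
  rw [hsNorm, Matrix.trace, Finset.sum_comm]
  simp only [diag_apply, mul_apply, conjTranspose_apply, Complex.star_def, Complex.conj_mul',
    Complex.re_sum]
  norm_cast

lemma hsNorm_smul (c : ℂ) (A : Matrix (Fin 2) (Fin 2) ℂ) : hsNorm (c • A) = ‖c‖ * hsNorm A := by
  simp only [hsNorm_eq_sqrt_sum_norm_sq, Matrix.smul_apply, smul_eq_mul, norm_mul, mul_pow,
    ← Finset.mul_sum]
  rw [Real.sqrt_mul (by positivity), Real.sqrt_sq (norm_nonneg c)]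

lemma hsNorm_one : hsNorm (1 : Matrix (Fin 2) (Fin 2) ℂ) = Real.sqrt 2 := by
  simp [hsNorm_eq_sqrt_sum_norm_sq, Fin.sum_univ_two, one_apply]
  norm_num

lemma hsInner_ofReal_smul_left (r : ℝ) (A B : Matrix (Fin 2) (Fin 2) ℂ) :
    hsInner ((r : ℂ) • A) B = r * hsInner A B := by
  simp [hsInner, trace_smul]

lemma hsInner_smul_right (c : ℂ) (A B : Matrix (Fin 2) (Fin 2) ℂ) :
    hsInner A (c • B) = c * hsInner A B := by
  simp [hsInner, trace_smul]

lemma hsInner_smul_one_mul_smul_one_mul (c : ℂ) (A : Matrix (Fin 2) (Fin 2) ℂ) :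
    hsInner (c • 1) (A * (c • 1) * A) = starRingEnd ℂ c * c * (A * A).trace := by
  simp only [hsInner, conjTranspose_smul, conjTranspose_one, Matrix.mul_smul, smul_mul, mul_one,
    one_mul, trace_smul, smul_eq_mul, Complex.star_def]
  ring

end HilbertSchmidt

section SelfEnergy

variable (ρ : ℝ)

lemma selfEnergy_smul (c : ℂ) (A : Matrix (Fin 2) (Fin 2) ℂ) :
    selfEnergy ρ (c • A) = c • selfEnergy ρ A := by
  ext i j; fin_cases i <;> fin_cases j <;> simp [selfEnergy] <;> ring

lemma selfEnergy_one : selfEnergy ρ 1 = 1 := by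
  ext i j; fin_cases i <;> fin_cases j <;> simp [selfEnergy]

lemma hsInner_selfEnergy_left (A B : Matrix (Fin 2) (Fin 2) ℂ) :
    hsInner (selfEnergy ρ A) B = hsInner A (selfEnergy ρ B) := by
  simp [hsInner, selfEnergy, Matrix.trace, Matrix.mul_apply, Fin.sum_univ_two]
  ring

variable {ρ}

lemma hsNorm_selfEnergy_le (hρ : |ρ| ≤ 1) (A : Matrix (Fin 2) (Fin 2) ℂ) :
    hsNorm (selfEnergy ρ A) ≤ hsNorm A := by
  have hρ2 : ρ ^ 2 ≤ 1 := (sq_le_one_iff_abs_le_one ρ).2 hρ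
  simp only [hsNorm_eq_sqrt_sum_norm_sq, Fin.sum_univ_two, selfEnergy, of_apply, cons_val',
    cons_val_zero, cons_val_one, empty_val', cons_val_fin_one, norm_mul, Complex.norm_real,
    Real.norm_eq_abs, mul_pow, sq_abs]
  apply Real.sqrt_le_sqrt
  nlinarith [mul_le_mul_of_nonneg_right hρ2 (sq_nonneg ‖A 0 1‖),
    mul_le_mul_of_nonneg_right hρ2 (sq_nonneg ‖A 1 0‖)]

end SelfEnergy

section Spectrum

variable {ρ : ℝ} {R : Matrix (Fin 2) (Fin 2) ℂ}

lemma eq_smul_one_of_selfEnergy_eq_self (hρ : ρ ^ 2 ≠ 1) (hR : R 0 0 = R 1 1)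
    (hfix : selfEnergy ρ R = R) : R = R 0 0 • 1 := by
  have h01 : ρ * R 1 0 = R 0 1 := by simpa [selfEnergy] using congrFun (congrFun hfix 0) 1
  have h10 : ρ * R 0 1 = R 1 0 := by simpa [selfEnergy] using congrFun (congrFun hfix 1) 0
  have hρ' : (ρ : ℂ) ^ 2 - 1 ≠ 0 := by
    rw [sub_ne_zero]; exact_mod_cast hρ
  have hz01 : R 0 1 = 0 := by
    have : ((ρ : ℂ) ^ 2 - 1) * R 0 1 = 0 := by linear_combination ρ * h10 + h01
    exact (mul_eq_zero.1 this).resolve_left hρ'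
  have hz10 : R 1 0 = 0 := by rw [← h10, hz01, mul_zero]
  ext i j
  fin_cases i <;> fin_cases j <;> simp [hz01, hz10, hR]

lemma selfEnergy_eigenvalue_cases {c : ℂ} (hR : R 0 0 = R 1 1) (hR0 : R ≠ 0)
    (hc : selfEnergy ρ R = c • R) : c = 1 ∨ c = ρ ∨ c = -ρ := by
  have h00 : R 1 1 = c * R 0 0 := by simpa [selfEnergy] using congrFun (congrFun hc 0) 0
  have h01 : ρ * R 1 0 = c * R 0 1 := by simpa [selfEnergy] using congrFun (congrFun hc 0) 1
  have h10 : ρ * R 0 1 = c * R 1 0 := by simpa [selfEnergy] using congrFun (congrFun hc 1) 0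
  by_cases hd : R 0 0 = 0
  · right
    have hoff : R 0 1 ≠ 0 ∨ R 1 0 ≠ 0 := by
      by_contra! hcon
      refine hR0 (Matrix.ext fun i j => ?_)
      fin_cases i <;> fin_cases j <;> simp [hcon.1, hcon.2, hd, ← hR]
    have key : (c - ρ) * (c + ρ) = 0 := by
      rcases hoff with ho | ho
      · refine (mul_eq_zero.1 ?_).resolve_right ho
        linear_combination (-c) * h01 - ρ * h10
      · refine (mul_eq_zero.1 ?_).resolve_right ho
        linear_combination (-c) * h10 - ρ * h01
    rcases mul_eq_zero.1 key with h | h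
    · exact Or.inl (sub_eq_zero.1 h)
    · exact Or.inr (eq_neg_of_add_eq_zero_left h)
  · left
    refine (mul_eq_zero.1 (?_ : (c - 1) * R 0 0 = 0)).resolve_right hd |> sub_eq_zero.1
    linear_combination -h00 - hR

end Spectrum

lemma trace_conjTranspose_mul_conjTranspose_elliptic (v : ℝ) (b : ℂ) :
    let M : Matrix (Fin 2) (Fin 2) ℂ := !![Complex.I * v, starRingEnd ℂ b; b, Complex.I * v]
    (Mᴴ * Mᴴ).trace = 2 * ((‖b‖ ^ 2 - v ^ 2 : ℝ) : ℂ) := by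
  intro M
  simp [M, Matrix.trace, Matrix.mul_apply, Fin.sum_univ_two, Complex.conj_mul', Complex.mul_conj']
  ring_nf
  simp only [Complex.I_sq]
  ring

lemma mul_hsInner_unitary_conj (k : ℝ) (hk : 0 < k) (M : Matrix (Fin 2) (Fin 2) ℂ) :
    let U : Matrix (Fin 2) (Fin 2) ℂ := ((Real.sqrt k : ℂ))⁻¹ • M
    let h : Matrix (Fin 2) (Fin 2) ℂ := ((Real.sqrt 2 : ℂ))⁻¹ • 1
    (k : ℂ) * hsInner h (Uᴴ * h * Uᴴ) = (Mᴴ * Mᴴ).trace / 2 := by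
  intro U h
  have hsk : (Real.sqrt k : ℂ) ^ 2 = k := by exact_mod_cast Real.sq_sqrt hk.le
  have hs2 : (Real.sqrt 2 : ℂ) ^ 2 = 2 := by exact_mod_cast Real.sq_sqrt zero_le_two
  have hsk0 : (Real.sqrt k : ℂ) ≠ 0 := by exact_mod_cast (Real.sqrt_pos.2 hk).ne'
  have hs20 : (Real.sqrt 2 : ℂ) ≠ 0 := by exact_mod_cast (Real.sqrt_pos.2 zero_lt_two).ne'
  rw [hsInner_smul_one_mul_smul_one_mul]
  simp only [U, conjTranspose_smul, smul_mul_smul, trace_smul, smul_eq_mul, Complex.star_def,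
    map_inv₀, Complex.conj_ofReal]
  field_simp
  rw [hsk, hs2]
  ring

theorem stmt15_general (ρ η v : ℝ) (hρ₁ : -1 < ρ) (hρ₂ : ρ < 1) (hη₁ : 0 < η)
    (hv : 0 < v) (b : ℂ) (M : Matrix (Fin 2) (Fin 2) ℂ)
    (hform : M = !![Complex.I * v, (starRingEnd ℂ) b; b, Complex.I * v])
    (hrel : v ^ 2 + ‖b‖ ^ 2 = v / (η + v)) :
    let k : ℝ := v ^ 2 + ‖b‖ ^ 2
    let U : Matrix (Fin 2) (Fin 2) ℂ := ((Real.sqrt k : ℂ))⁻¹ • M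
    let T : Matrix (Fin 2) (Fin 2) ℂ → Matrix (Fin 2) (Fin 2) ℂ :=
      fun R => (k : ℂ) • selfEnergy ρ R
    let h : Matrix (Fin 2) (Fin 2) ℂ := ((Real.sqrt 2 : ℂ))⁻¹ • (1 : Matrix (Fin 2) (Fin 2) ℂ)
    -- `T` leaves `E₋^⊥` invariant and is self-adjoint on it
    (∀ R : Matrix (Fin 2) (Fin 2) ℂ, R 0 0 = R 1 1 → (T R) 0 0 = (T R) 1 1) ∧
    (∀ R S : Matrix (Fin 2) (Fin 2) ℂ, R 0 0 = R 1 1 → S 0 0 = S 1 1 →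
      hsInner (T R) S = hsInner R (T S)) ∧
    -- `‖T‖ = k ≤ 1`, attained at the normalized eigenvector `h`
    (∀ R : Matrix (Fin 2) (Fin 2) ℂ, R 0 0 = R 1 1 → hsNorm (T R) ≤ k * hsNorm R) ∧
    k ≤ 1 ∧ hsNorm h = 1 ∧ T h = (k : ℂ) • h ∧
    -- nondegeneracy of the top eigenvalue
    (∀ R : Matrix (Fin 2) (Fin 2) ℂ, R 0 0 = R 1 1 → T R = (k : ℂ) • R →
      ∃ c : ℂ, R = c • (1 : Matrix (Fin 2) (Fin 2) ℂ)) ∧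
    -- spectrum of `T` on `E₋^⊥` is `{k, ρk, -ρk}`, hence `Gap(T) = k(1-|ρ|)`
    (∀ (c : ℂ) (R : Matrix (Fin 2) (Fin 2) ℂ), R 0 0 = R 1 1 → R ≠ 0 →
      T R = c • R → c = (k : ℂ) ∨ c = ((ρ * k : ℝ) : ℂ) ∨ c = -((ρ * k : ℝ) : ℂ)) ∧
    k - |ρ| * k = k * (1 - |ρ|) ∧
    -- the key scalar identity
    (1 : ℂ) - (k : ℂ) * hsInner h (Uᴴ * h * Uᴴ) = ((2 * v ^ 2 + η / (η + v) : ℝ) : ℂ) := by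
  intro k U T h
  have hk : 0 < k := by positivity
  have hkc : (k : ℂ) ≠ 0 := by exact_mod_cast hk.ne'
  have hρ : |ρ| ≤ 1 := abs_le.2 ⟨hρ₁.le, hρ₂.le⟩
  have hρ2 : ρ ^ 2 ≠ 1 := by nlinarith
  have hk1 : k ≤ 1 := by
    change v ^ 2 + ‖b‖ ^ 2 ≤ 1
    rw [hrel, div_le_one (by positivity)]
    linarith
  refine ⟨fun R hR => by simp [T, selfEnergy, hR], fun R S _ _ => ?_, fun R _ => ?_, hk1, ?_, ?_,
    fun R hR hTR => ?_, fun c R hR hR0 hTR => ?_, by ring, ?_⟩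
  · simp only [T, hsInner_ofReal_smul_left, hsInner_smul_right, hsInner_selfEnergy_left]
  · rw [hsNorm_smul, Complex.norm_of_nonneg hk.le]
    exact mul_le_mul_of_nonneg_left (hsNorm_selfEnergy_le hρ R) hk.le
  · rw [hsNorm_smul, hsNorm_one, norm_inv, Complex.norm_of_nonneg (Real.sqrt_nonneg 2)]
    exact inv_mul_cancel₀ (Real.sqrt_pos.2 zero_lt_two).ne'
  · simp only [T, h, selfEnergy_smul, selfEnergy_one]
  · exact ⟨R 0 0, eq_smul_one_of_selfEnergy_eq_self hρ2 hR (smul_right_injective _ hkc hTR)⟩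
  · have hS : selfEnergy ρ R = (c / k) • R := by
      rw [div_eq_inv_mul, mul_smul, ← hTR, smul_smul, inv_mul_cancel₀ hkc, one_smul]
    have hc : c = k * (c / k) := (mul_div_cancel₀ c hkc).symm
    push_cast
    rcases selfEnergy_eigenvalue_cases hR hR0 hS with h' | h' | h'
    · left; rw [hc, h', mul_one]
    · right; left; rw [hc, h', mul_comm]
    · right; right; rw [hc, h', mul_neg, mul_comm]
  · rw [mul_hsInner_unitary_conj k hk M, hform, trace_conjTranspose_mul_conjTranspose_elliptic]
    have hη : η / (η + v) = 1 - v / (η + v) := by field_simp; ring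
    rw [hη, ← hrel]
    push_cast
    ring

theorem stmt15 (ρ η v : ℝ) (hρ₁ : -1 < ρ) (hρ₂ : ρ < 1) (hη₁ : 0 < η) (hη₂ : η ≤ 1)
    (hv : 0 < v) (b : ℂ) (M : Matrix (Fin 2) (Fin 2) ℂ)
    (hform : M = !![Complex.I * v, (starRingEnd ℂ) b; b, Complex.I * v])
    (hrel : v ^ 2 + ‖b‖ ^ 2 = v / (η + v)) :
    let k : ℝ := v ^ 2 + ‖b‖ ^ 2
    let U : Matrix (Fin 2) (Fin 2) ℂ := ((Real.sqrt k : ℂ))⁻¹ • M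
    let T : Matrix (Fin 2) (Fin 2) ℂ → Matrix (Fin 2) (Fin 2) ℂ :=
      fun R => (k : ℂ) • selfEnergy ρ R
    let h : Matrix (Fin 2) (Fin 2) ℂ := ((Real.sqrt 2 : ℂ))⁻¹ • (1 : Matrix (Fin 2) (Fin 2) ℂ)
    -- `T` leaves `E₋^⊥` invariant and is self-adjoint on it
    (∀ R : Matrix (Fin 2) (Fin 2) ℂ, R 0 0 = R 1 1 → (T R) 0 0 = (T R) 1 1) ∧
    (∀ R S : Matrix (Fin 2) (Fin 2) ℂ, R 0 0 = R 1 1 → S 0 0 = S 1 1 →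
      hsInner (T R) S = hsInner R (T S)) ∧
    -- `‖T‖ = k ≤ 1`, attained at the normalized eigenvector `h`
    (∀ R : Matrix (Fin 2) (Fin 2) ℂ, R 0 0 = R 1 1 → hsNorm (T R) ≤ k * hsNorm R) ∧
    k ≤ 1 ∧ hsNorm h = 1 ∧ T h = (k : ℂ) • h ∧
    -- nondegeneracy of the top eigenvalue
    (∀ R : Matrix (Fin 2) (Fin 2) ℂ, R 0 0 = R 1 1 → T R = (k : ℂ) • R →
      ∃ c : ℂ, R = c • (1 : Matrix (Fin 2) (Fin 2) ℂ)) ∧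
    -- spectrum of `T` on `E₋^⊥` is `{k, ρk, -ρk}`, hence `Gap(T) = k(1-|ρ|)`
    (∀ (c : ℂ) (R : Matrix (Fin 2) (Fin 2) ℂ), R 0 0 = R 1 1 → R ≠ 0 →
      T R = c • R → c = (k : ℂ) ∨ c = ((ρ * k : ℝ) : ℂ) ∨ c = -((ρ * k : ℝ) : ℂ)) ∧
    k - |ρ| * k = k * (1 - |ρ|) ∧
    -- the key scalar identity
    (1 : ℂ) - (k : ℂ) * hsInner h (Uᴴ * h * Uᴴ) = ((2 * v ^ 2 + η / (η + v) : ℝ) : ℂ) :=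
  stmt15_general ρ η v hρ₁ hρ₂ hη₁ hv b M hform hrel
end

section
/- Delocalisation from resolvent bound: Let X ∈ ℂ^{n×n}, ζ ∈ ℂ, u ∈ ℂⁿ \ {0} with X u = ζ u, and let H_ζ = [[0, X-ζ],[(X-ζ)*, 0]] ∈ ℂ^{2n×2n} with resolvent G = (H_ζ - iη)⁻¹ for η > 0. Then for any w ∈ ℂⁿ, setting x = (0,w)ᵀ ∈ ℂ^{2n}: Im⟨x, G x⟩ ≥ |⟨w,u⟩|²/(η‖u‖²). Consequently, if |⟨x, G x⟩| ≤ C‖w‖² then |⟨w,u⟩|² ≤ C η ‖w‖²‖u‖². -/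
/-!
Write `A = H - iη` with `H` Hermitian and `y = A⁻¹ x`, so that `x = A y`. Then
`Im ⟨x, y⟩ = η ‖y‖²`, and a vector `v` in the kernel of `H` satisfies `⟨v, x⟩ = -iη ⟨v, y⟩`.
Cauchy–Schwarz gives `|⟨v, x⟩|² ≤ η² ‖v‖² ‖y‖² = η ‖v‖² Im ⟨x, A⁻¹ x⟩`. For `H = H_ζ` the vector
`v = (0, u)` lies in the kernel, and `⟨v, (0, w)⟩ = ⟨u, w⟩`.
-/

open Matrix Complex
open scoped ComplexOrder

namespace Matrix

variable {m : Type*} [Fintype m]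

lemma star_dotProduct_self_eq_sum_norm_sq (y : m → ℂ) :
    star y ⬝ᵥ y = ((∑ i, ‖y i‖ ^ 2 : ℝ) : ℂ) := by
  simp [dotProduct, ← Complex.normSq_eq_norm_sq, Complex.normSq_eq_conj_mul_self]

lemma norm_star_dotProduct_sq_le (a b : m → ℂ) :
    ‖star a ⬝ᵥ b‖ ^ 2 ≤ (∑ i, ‖a i‖ ^ 2) * ∑ i, ‖b i‖ ^ 2 := by
  have h := norm_inner_le_norm (𝕜 := ℂ) (WithLp.toLp 2 a) (WithLp.toLp 2 b)
  rw [EuclideanSpace.inner_toLp_toLp, dotProduct_comm] at h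
  rw [← EuclideanSpace.norm_sq_eq (WithLp.toLp 2 a), ← EuclideanSpace.norm_sq_eq (WithLp.toLp 2 b),
    ← mul_pow]
  gcongr

variable [DecidableEq m] {H : Matrix m m ℂ} {η : ℝ}

lemma IsHermitian.im_star_mulVec_dotProduct_sub_smul (hH : H.IsHermitian) (y : m → ℂ) :
    (star ((H - (I * η) • 1) *ᵥ y) ⬝ᵥ y).im = η * ∑ i, ‖y i‖ ^ 2 := by
  have hHy : star (H *ᵥ y) ⬝ᵥ y = star y ⬝ᵥ H *ᵥ y := by
    rw [star_mulVec, ← dotProduct_mulVec, hH.eq]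
  have hreal : (star y ⬝ᵥ H *ᵥ y).im = 0 := hH.im_star_dotProduct_mulVec_self y
  simp only [sub_mulVec, smul_mulVec, one_mulVec, star_sub, sub_dotProduct, hHy, star_smul,
    smul_dotProduct, star_dotProduct_self_eq_sum_norm_sq]
  simp [hreal, -ofReal_pow]

lemma IsHermitian.isUnit_sub_smul_one (hH : H.IsHermitian) (hη : η ≠ 0) :
    IsUnit (H - (I * η) • 1) := by
  refine mulVec_injective_iff_isUnit.mp fun p q hpq ↦ sub_eq_zero.mp ?_
  have hz : (H - (I * η) • 1) *ᵥ (p - q) = 0 := by rw [mulVec_sub, hpq, sub_self]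
  have h := hH.im_star_mulVec_dotProduct_sub_smul (η := η) (p - q)
  rw [hz, star_zero, zero_dotProduct, zero_im, zero_eq_mul] at h
  rw [← dotProduct_star_self_eq_zero, star_dotProduct_self_eq_sum_norm_sq,
    h.resolve_left hη, ofReal_zero]

lemma IsHermitian.star_dotProduct_sub_smul_mulVec (hH : H.IsHermitian) {v : m → ℂ}
    (hv : H *ᵥ v = 0) (c : ℂ) (y : m → ℂ) :
    star v ⬝ᵥ (H - c • 1) *ᵥ y = -c * (star v ⬝ᵥ y) := by
  have hvH : star v ᵥ* H = 0 := by
    rw [← hH.eq, ← star_mulVec, hv, star_zero]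
  rw [sub_mulVec, dotProduct_sub, dotProduct_mulVec, hvH, zero_dotProduct, smul_mulVec,
    one_mulVec, dotProduct_smul, smul_eq_mul]
  ring

theorem IsHermitian.norm_star_dotProduct_sq_le_im_resolvent (hH : H.IsHermitian) (hη : η ≠ 0)
    {v : m → ℂ} (hv : H *ᵥ v = 0) (x : m → ℂ) :
    ‖star v ⬝ᵥ x‖ ^ 2
      ≤ η * (∑ i, ‖v i‖ ^ 2) * (star x ⬝ᵥ (H - (I * η) • 1)⁻¹ *ᵥ x).im := by
  set A := H - (I * η) • 1
  have hA : IsUnit A.det := (isUnit_iff_isUnit_det A).mp (hH.isUnit_sub_smul_one hη)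
  obtain ⟨y, rfl⟩ : ∃ y, A *ᵥ y = x :=
    ⟨A⁻¹ *ᵥ x, by rw [mulVec_mulVec, mul_nonsing_inv A hA, one_mulVec]⟩
  rw [mulVec_mulVec, nonsing_inv_mul A hA, one_mulVec, hH.im_star_mulVec_dotProduct_sub_smul,
    hH.star_dotProduct_sub_smul_mulVec hv]
  calc ‖-(I * η) * (star v ⬝ᵥ y)‖ ^ 2 = η ^ 2 * ‖star v ⬝ᵥ y‖ ^ 2 := by
        simp [mul_pow]
    _ ≤ η ^ 2 * ((∑ i, ‖v i‖ ^ 2) * ∑ i, ‖y i‖ ^ 2) := by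
        gcongr; exact norm_star_dotProduct_sq_le v y
    _ = η * (∑ i, ‖v i‖ ^ 2) * (η * ∑ i, ‖y i‖ ^ 2) := by ring

end Matrix

theorem stmt16 (n : ℕ) (X : Matrix (Fin n) (Fin n) ℂ) (ζ : ℂ)
    (u : Fin n → ℂ) (hu : u ≠ 0) (heig : X.mulVec u = ζ • u)
    (η : ℝ) (hη : 0 < η) (w : Fin n → ℂ) (C : ℝ) :
    let Hζ : Matrix (Fin n ⊕ Fin n) (Fin n ⊕ Fin n) ℂ :=
      Matrix.fromBlocks 0 (X - ζ • (1 : Matrix (Fin n) (Fin n) ℂ))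
        (X - ζ • (1 : Matrix (Fin n) (Fin n) ℂ))ᴴ 0
    let G := (Hζ - (Complex.I * η) • (1 : Matrix (Fin n ⊕ Fin n) (Fin n ⊕ Fin n) ℂ))⁻¹
    let x : Fin n ⊕ Fin n → ℂ := Sum.elim 0 w
    (‖dotProduct (star w) u‖ ^ 2 / (η * ∑ i, ‖u i‖ ^ 2)
        ≤ (dotProduct (star x) (G.mulVec x)).im) ∧
      (‖dotProduct (star x) (G.mulVec x)‖ ≤ C * ∑ i, ‖w i‖ ^ 2 →
        ‖dotProduct (star w) u‖ ^ 2
          ≤ C * η * (∑ i, ‖w i‖ ^ 2) * (∑ i, ‖u i‖ ^ 2)) := by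
  intro Hζ G x
  have hHerm : Hζ.IsHermitian := isHermitian_zero.fromBlocks rfl isHermitian_zero
  have hker : Hζ *ᵥ Sum.elim 0 u = 0 := by
    have : (X - ζ • 1) *ᵥ u = 0 := by rw [sub_mulVec, heig, smul_mulVec, one_mulVec, sub_self]
    simp [Hζ, fromBlocks_mulVec, this]
  have hmain := hHerm.norm_star_dotProduct_sq_le_im_resolvent hη.ne' hker x
  have hpair : ‖star (Sum.elim 0 u : Fin n ⊕ Fin n → ℂ) ⬝ᵥ x‖ = ‖star w ⬝ᵥ u‖ := by
    rw [star_dotProduct, norm_star]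
    simp [x, dotProduct, Fintype.sum_sum_type]
  have hnorm : ∑ i, ‖(Sum.elim 0 u : Fin n ⊕ Fin n → ℂ) i‖ ^ 2 = ∑ i, ‖u i‖ ^ 2 := by
    simp [Fintype.sum_sum_type]
  rw [hpair, hnorm] at hmain
  have hU : 0 < ∑ i, ‖u i‖ ^ 2 := by
    obtain ⟨i, hi⟩ := Function.ne_iff.mp hu
    exact Finset.sum_pos' (fun j _ ↦ by positivity) ⟨i, Finset.mem_univ i, by positivity⟩
  refine ⟨?_, fun hC ↦ ?_⟩
  · rw [div_le_iff₀ (by positivity)]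
    linarith
  · calc ‖star w ⬝ᵥ u‖ ^ 2 ≤ η * (∑ i, ‖u i‖ ^ 2) * (star x ⬝ᵥ G *ᵥ x).im := hmain
      _ ≤ η * (∑ i, ‖u i‖ ^ 2) * (C * ∑ i, ‖w i‖ ^ 2) := by
        gcongr; exact (im_le_norm _).trans hC
      _ = C * η * (∑ i, ‖w i‖ ^ 2) * ∑ i, ‖u i‖ ^ 2 := by ring
end
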